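/- Abelian duality at the cochain level (the core of the paper's Theorem in §5.3 that Mxw°_{p,n}⟨κ, e⟩ ≅ Mxw°_{n−p−2,n}⟨1/κ, 1/e⟩): With the two-row data (V_i, W_j, U, a, b, s, t, u, w) fixed as in the context, suppose additionally given a real vector space U′ and a linear isomorphism σ: U → U′. Let T′⟨κ′, e′⟩ denote the cochain complex built from the same data with the two rows exchanged: top row ℤ —w→ W₀ → … → W_q —σ∘t→ U′ and bottom row ℤ —e′·u→ V₀ → … → V_p —(−κ′)·(σ∘s)→ U′, with W_q and V_p in degree 0, U′ in degree 1, and the copies of ℤ in degrees −q−1 and −p−1 respectively. Then for all nonzero real numbers κ and e there is an isomorphism of cochain complexes of abelian groups T⟨1, e, 1, κ⟩ ≅ T′⟨1/κ, 1/e⟩, given by the identity on the two copies of ℤ, multiplication by 1/e on every V_i and every W_j, and the map −(1/(κe))·σ on U. -/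

import Mathlib

/-!
Statement 14: Abelian duality at the cochain level (the core of the paper's Theorem in
§5.3 that `Mxw°_{p,n}⟨κ,e⟩ ≅ Mxw°_{n−p−2,n}⟨1/κ,1/e⟩`).

Fix `p q : ℕ`, real vector spaces `V₀, …, V_p`, `W₀, …, W_q`, `U` (encoded as ℤ-indexed
families `V W : ℤ → Type` vanishing outside `[0, p]` resp. `[0, q]`), linear maps
`a_i : V_i → V_{i+1}`, `b_j : W_j → W_{j+1}`, `s : V_p → U`, `t : W_q → U`, and additive
maps `u : ℤ → V₀`, `w : ℤ → W₀`, with all composites of consecutive maps vanishing.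
For nonzero reals `m, e, λ, κ`, `T⟨m,e,λ,κ⟩` is the cochain complex of abelian groups
whose degree-`r` term is `ℤ` (at `-p-1`) ⊕ `ℤ` (at `-q-1`) ⊕ `V_{p+r}` ⊕ `W_{q+r}` ⊕ `U`
(at `1`), with differentials `m·u`, `e·w`, the `a`'s and `b`'s, and `λ·s`, `-κ·t` into the
degree-`1` term `U`.

Given additionally a real vector space `U'` and a linear isomorphism `σ : U ≃ U'`, let
`T'⟨κ',e'⟩` be the complex built from the same data with the two rows exchanged:
top row `ℤ —w→ W₀ → … → W_q —σ∘t→ U'`, bottom row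
`ℤ —e'·u→ V₀ → … → V_p —(−κ')·(σ∘s)→ U'`.  Then for all nonzero reals `κ, e` there is an
isomorphism of cochain complexes of abelian groups `T⟨1,e,1,κ⟩ ≅ T'⟨1/κ,1/e⟩`, given by
the identity on the two copies of `ℤ`, multiplication by `1/e` on every `V_i` and every
`W_j`, and the map `−(1/(κe))·σ` on `U`.
-/

universe v

noncomputable section

/-- Transport along an equality of indices in a ℤ-indexed family of abelian groups. -/
def famCast {V : ℤ → Type v} [∀ i, AddCommGroup (V i)] {i j : ℤ} (h : i = j) :
    V i →+ V j := by
  subst h; exact AddMonoidHom.id _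

/-- A copy of `ℤ` placed in the single degree `d`: as a subgroup of `ℤ`, everything in
degree `r = d` and zero otherwise. -/
def zAt (d r : ℤ) : AddSubgroup ℤ := if r = d then ⊤ else ⊥

/-- A real vector space `M` placed in the single degree `d`: as a submodule of `M`,
everything in degree `r = d` and zero otherwise. -/
def modAt (M : Type v) [AddCommGroup M] [Module ℝ M] (d r : ℤ) : Submodule ℝ M :=
  if r = d then ⊤ else ⊥

/-- Include `M` into its degree-`d` copy, in degree `r = d`. -/
def intoModAt {M : Type v} [AddCommGroup M] [Module ℝ M] {d r : ℤ} (h : r = d) :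
    M →+ ↥(modAt M d r) where
  toFun x := ⟨x, by simp [modAt, h]⟩
  map_zero' := rfl
  map_add' _ _ := rfl

section TwoRow

variable (p q : ℕ)
variable (V W : ℤ → Type v)
variable [∀ i, AddCommGroup (V i)] [∀ i, Module ℝ (V i)]
variable [∀ i, AddCommGroup (W i)] [∀ i, Module ℝ (W i)]
variable (U : Type v) [AddCommGroup U] [Module ℝ U]
variable (a : ∀ i : ℤ, V i →ₗ[ℝ] V (i + 1))
variable (b : ∀ i : ℤ, W i →ₗ[ℝ] W (i + 1))
variable (s : V (p : ℤ) →ₗ[ℝ] U) (t : W (q : ℤ) →ₗ[ℝ] U)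
variable (u : ℤ →+ V 0) (w : ℤ →+ W 0)

/-- Degree-`r` term of the two-row complex `T⟨m,e,λ,κ⟩`: the direct sum of a copy of `ℤ`
in degree `-p-1`, a copy of `ℤ` in degree `-q-1`, `V_{p+r}`, `W_{q+r}`, and `U` in
degree `1`.  (The terms do not depend on the coupling constants.) -/
abbrev TTerm (r : ℤ) :=
  ↥(zAt (-(p : ℤ) - 1) r) × ↥(zAt (-(q : ℤ) - 1) r) ×
    V ((p : ℤ) + r) × W ((q : ℤ) + r) × ↥(modAt U 1 r)

/-- Projection onto the first `ℤ`-summand. -/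
def prZ1 (r : ℤ) : TTerm p q V W U r →+ ↥(zAt (-(p : ℤ) - 1) r) :=
  AddMonoidHom.mk' (fun x => x.1) (fun _ _ => rfl)

/-- Projection onto the second `ℤ`-summand. -/
def prZ2 (r : ℤ) : TTerm p q V W U r →+ ↥(zAt (-(q : ℤ) - 1) r) :=
  AddMonoidHom.mk' (fun x => x.2.1) (fun _ _ => rfl)

/-- Projection onto the `V`-summand. -/
def prV (r : ℤ) : TTerm p q V W U r →+ V ((p : ℤ) + r) :=
  AddMonoidHom.mk' (fun x => x.2.2.1) (fun _ _ => rfl)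

/-- Projection onto the `W`-summand. -/
def prW (r : ℤ) : TTerm p q V W U r →+ W ((q : ℤ) + r) :=
  AddMonoidHom.mk' (fun x => x.2.2.2.1) (fun _ _ => rfl)

/-- The component of the differential landing in the `V`-row: the row map `a` together
with (in degree `-p-1`) the map `m·u` out of the first copy of `ℤ`. -/
def dTV (m : ℝ) (r : ℤ) : TTerm p q V W U r →+ V ((p : ℤ) + (r + 1)) :=
  (famCast (by ring : (p : ℤ) + r + 1 = (p : ℤ) + (r + 1))).comp
      ((a ((p : ℤ) + r)).toAddMonoidHom.comp (prV p q V W U r))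
    + (if h : r = -(p : ℤ) - 1 then
        (famCast (by omega : (0 : ℤ) = (p : ℤ) + (r + 1))).comp
          (((LinearMap.lsmul ℝ (V 0) m).toAddMonoidHom.comp u).comp
            ((zAt (-(p : ℤ) - 1) r).subtype.comp (prZ1 p q V W U r)))
      else 0)

/-- The component of the differential landing in the `W`-row: the row map `b` together
with (in degree `-q-1`) the map `e·w` out of the second copy of `ℤ`. -/
def dTW (e : ℝ) (r : ℤ) : TTerm p q V W U r →+ W ((q : ℤ) + (r + 1)) :=
  (famCast (by ring : (q : ℤ) + r + 1 = (q : ℤ) + (r + 1))).comp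
      ((b ((q : ℤ) + r)).toAddMonoidHom.comp (prW p q V W U r))
    + (if h : r = -(q : ℤ) - 1 then
        (famCast (by omega : (0 : ℤ) = (q : ℤ) + (r + 1))).comp
          (((LinearMap.lsmul ℝ (W 0) e).toAddMonoidHom.comp w).comp
            ((zAt (-(q : ℤ) - 1) r).subtype.comp (prZ2 p q V W U r)))
      else 0)

/-- The component of the differential landing in the degree-`1` term `U`:
`λ·s` on the `V`-row and `-κ·t` on the `W`-row. -/
def dTU (lam kap : ℝ) (r : ℤ) : TTerm p q V W U r →+ ↥(modAt U 1 (r + 1)) :=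
  if h : r = 0 then
    (intoModAt (by omega : r + 1 = 1)).comp
      (((lam • s).toAddMonoidHom.comp
          ((famCast (by omega : (p : ℤ) + r = (p : ℤ))).comp (prV p q V W U r)))
        + (((-kap) • t).toAddMonoidHom.comp
            ((famCast (by omega : (q : ℤ) + r = (q : ℤ))).comp (prW p q V W U r))))
  else 0

/-- The degree-`r` differential of the two-row complex `T⟨m,e,λ,κ⟩`. -/
def dT (m e lam kap : ℝ) (r : ℤ) : TTerm p q V W U r →+ TTerm p q V W U (r + 1) :=
  (0 : TTerm p q V W U r →+ ↥(zAt (-(p : ℤ) - 1) (r + 1))).prod <|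
    (0 : TTerm p q V W U r →+ ↥(zAt (-(q : ℤ) - 1) (r + 1))).prod <|
      (dTV p q V W U a u m r).prod <|
        (dTW p q V W U b w e r).prod (dTU p q V W U s t lam kap r)

end TwoRow


section Swapped

variable (p q : ℕ)
variable (V W : ℤ → Type v)
variable [∀ i, AddCommGroup (V i)] [∀ i, Module ℝ (V i)]
variable [∀ i, AddCommGroup (W i)] [∀ i, Module ℝ (W i)]
variable (U U' : Type v) [AddCommGroup U] [Module ℝ U] [AddCommGroup U'] [Module ℝ U']
variable (a : ∀ i : ℤ, V i →ₗ[ℝ] V (i + 1))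
variable (b : ∀ i : ℤ, W i →ₗ[ℝ] W (i + 1))
variable (s : V (p : ℤ) →ₗ[ℝ] U) (t : W (q : ℤ) →ₗ[ℝ] U)
variable (u : ℤ →+ V 0) (w : ℤ →+ W 0)
variable (σ : U ≃ₗ[ℝ] U')

/-- Degree-`r` term of the row-exchanged two-row complex `T'⟨κ',e'⟩`: a copy of `ℤ` in
degree `-q-1`, a copy of `ℤ` in degree `-p-1`, `W_{q+r}`, `V_{p+r}`, and `U'` in
degree `1`. -/
abbrev TTerm' (r : ℤ) :=
  ↥(zAt (-(q : ℤ) - 1) r) × ↥(zAt (-(p : ℤ) - 1) r) ×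
    W ((q : ℤ) + r) × V ((p : ℤ) + r) × ↥(modAt U' 1 r)

/-- Projection onto the first `ℤ`-summand of `T'`. -/
def prZ1' (r : ℤ) : TTerm' p q V W U' r →+ ↥(zAt (-(q : ℤ) - 1) r) :=
  AddMonoidHom.mk' (fun x => x.1) (fun _ _ => rfl)

/-- Projection onto the second `ℤ`-summand of `T'`. -/
def prZ2' (r : ℤ) : TTerm' p q V W U' r →+ ↥(zAt (-(p : ℤ) - 1) r) :=
  AddMonoidHom.mk' (fun x => x.2.1) (fun _ _ => rfl)

/-- Projection onto the `W`-summand of `T'`. -/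
def prW' (r : ℤ) : TTerm' p q V W U' r →+ W ((q : ℤ) + r) :=
  AddMonoidHom.mk' (fun x => x.2.2.1) (fun _ _ => rfl)

/-- Projection onto the `V`-summand of `T'`. -/
def prV' (r : ℤ) : TTerm' p q V W U' r →+ V ((p : ℤ) + r) :=
  AddMonoidHom.mk' (fun x => x.2.2.2.1) (fun _ _ => rfl)

/-- Component of the differential of `T'` landing in the `W`-row: the row map `b`
together with (in degree `-q-1`) the map `w` (coefficient `1`) out of the first copy
of `ℤ`. -/
def dT'W (r : ℤ) : TTerm' p q V W U' r →+ W ((q : ℤ) + (r + 1)) :=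
  (famCast (by ring : (q : ℤ) + r + 1 = (q : ℤ) + (r + 1))).comp
      ((b ((q : ℤ) + r)).toAddMonoidHom.comp (prW' p q V W U' r))
    + (if h : r = -(q : ℤ) - 1 then
        (famCast (by omega : (0 : ℤ) = (q : ℤ) + (r + 1))).comp
          (w.comp ((zAt (-(q : ℤ) - 1) r).subtype.comp (prZ1' p q V W U' r)))
      else 0)

/-- Component of the differential of `T'` landing in the `V`-row: the row map `a`
together with (in degree `-p-1`) the map `e'·u` out of the second copy of `ℤ`. -/
def dT'V (e' : ℝ) (r : ℤ) : TTerm' p q V W U' r →+ V ((p : ℤ) + (r + 1)) :=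
  (famCast (by ring : (p : ℤ) + r + 1 = (p : ℤ) + (r + 1))).comp
      ((a ((p : ℤ) + r)).toAddMonoidHom.comp (prV' p q V W U' r))
    + (if h : r = -(p : ℤ) - 1 then
        (famCast (by omega : (0 : ℤ) = (p : ℤ) + (r + 1))).comp
          (((LinearMap.lsmul ℝ (V 0) e').toAddMonoidHom.comp u).comp
            ((zAt (-(p : ℤ) - 1) r).subtype.comp (prZ2' p q V W U' r)))
      else 0)

/-- Component of the differential of `T'` landing in the degree-`1` term `U'`:
`σ∘t` on the `W`-row and `-κ'·(σ∘s)` on the `V`-row. -/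
def dT'U (kap' : ℝ) (r : ℤ) : TTerm' p q V W U' r →+ ↥(modAt U' 1 (r + 1)) :=
  if h : r = 0 then
    (intoModAt (by omega : r + 1 = 1)).comp
      (((σ.toLinearMap ∘ₗ t).toAddMonoidHom.comp
          ((famCast (by omega : (q : ℤ) + r = (q : ℤ))).comp (prW' p q V W U' r)))
        + (((-kap') • (σ.toLinearMap ∘ₗ s)).toAddMonoidHom.comp
            ((famCast (by omega : (p : ℤ) + r = (p : ℤ))).comp (prV' p q V W U' r))))
  else 0

/-- The degree-`r` differential of the row-exchanged complex `T'⟨κ',e'⟩`. -/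
def dT' (kap' e' : ℝ) (r : ℤ) : TTerm' p q V W U' r →+ TTerm' p q V W U' (r + 1) :=
  (0 : TTerm' p q V W U' r →+ ↥(zAt (-(q : ℤ) - 1) (r + 1))).prod <|
    (0 : TTerm' p q V W U' r →+ ↥(zAt (-(p : ℤ) - 1) (r + 1))).prod <|
      (dT'W p q V W U' b w r).prod <|
        (dT'V p q V W U' a u e' r).prod (dT'U p q V W U U' s t σ kap' r)

end Swapped

/-! The two complexes have the same terms up to exchanging the rows, and their differentials
differ only in the coupling constants. Scaling both rows by `c` and composing `σ` with a
scaling by `c'` on the degree-one term intertwines the differentials as soon as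
`c·e = 1`, `e' = c·m`, `-κ'·c = c'·λ` and `c = -c'·κ`; with `m = λ = 1` these force
`c = e' = 1/e`, `c' = -1/(κe)` and `κ' = 1/κ`. -/

@[simp] lemma famCast_smul {R : Type*} [Semiring R] {V : ℤ → Type v}
    [∀ i, AddCommGroup (V i)] [∀ i, Module R (V i)] {i j : ℤ} (h : i = j) (c : R) (x : V i) :
    famCast (V := V) h (c • x) = c • famCast (V := V) h x := by
  subst h; rfl

lemma map_modAt {M N : Type v} [AddCommGroup M] [Module ℝ M] [AddCommGroup N] [Module ℝ N]
    (σ : M ≃ₗ[ℝ] N) (d r : ℤ) : (modAt M d r).map (σ : M →ₗ[ℝ] N) = modAt N d r := by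
  unfold modAt
  split_ifs
  · rw [Submodule.map_top, LinearEquiv.range]
  · exact Submodule.map_bot _

def modAtCongr {M N : Type v} [AddCommGroup M] [Module ℝ M] [AddCommGroup N] [Module ℝ N]
    (σ : M ≃ₗ[ℝ] N) (d r : ℤ) : ↥(modAt M d r) ≃ₗ[ℝ] ↥(modAt N d r) :=
  (σ.submoduleMap _).trans (LinearEquiv.ofEq _ _ (map_modAt σ d r))

@[simp] lemma modAtCongr_coe {M N : Type v} [AddCommGroup M] [Module ℝ M] [AddCommGroup N]
    [Module ℝ N] (σ : M ≃ₗ[ℝ] N) (d r : ℤ) (x : ↥(modAt M d r)) :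
    (modAtCongr σ d r x : N) = σ x :=
  rfl

section RowSwap

variable (p q : ℕ) (V W : ℤ → Type v)
variable [∀ i, AddCommGroup (V i)] [∀ i, Module ℝ (V i)]
variable [∀ i, AddCommGroup (W i)] [∀ i, Module ℝ (W i)]
variable {U U' : Type v} [AddCommGroup U] [Module ℝ U] [AddCommGroup U'] [Module ℝ U']

def rowSwapEquiv (c : ℝ) (hc : c ≠ 0) (τ : U ≃ₗ[ℝ] U') (r : ℤ) :
    TTerm p q V W U r ≃+ TTerm' p q V W U' r where
  toFun x := (x.2.1, x.1, c • x.2.2.2.1, c • x.2.2.1, modAtCongr τ 1 r x.2.2.2.2)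
  invFun y := (y.2.1, y.1, c⁻¹ • y.2.2.2.1, c⁻¹ • y.2.2.1, (modAtCongr τ 1 r).symm y.2.2.2.2)
  left_inv x := by simp [smul_smul, hc]
  right_inv y := by simp [smul_smul, hc]
  map_add' x y := by simp [smul_add]

variable {p q V W}
variable (a : ∀ i : ℤ, V i →ₗ[ℝ] V (i + 1)) (b : ∀ i : ℤ, W i →ₗ[ℝ] W (i + 1))
variable (s : V (p : ℤ) →ₗ[ℝ] U) (t : W (q : ℤ) →ₗ[ℝ] U) (u : ℤ →+ V 0) (w : ℤ →+ W 0)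
variable {c : ℝ} (hc : c ≠ 0) (τ : U ≃ₗ[ℝ] U')

lemma dT'W_rowSwapEquiv {e : ℝ} (hce : c * e = 1) (r : ℤ) (x : TTerm p q V W U r) :
    dT'W p q V W U' b w r (rowSwapEquiv p q V W c hc τ r x) = c • dTW p q V W U b w e r x := by
  by_cases h : r = -(q : ℤ) - 1
  · simp [dT'W, dTW, h, rowSwapEquiv, prW', prW, prZ1', prZ2, smul_smul, hce]
  · simp [dT'W, dTW, h, rowSwapEquiv, prW', prW]

lemma dT'V_rowSwapEquiv {m e' : ℝ} (he' : e' = c * m) (r : ℤ) (x : TTerm p q V W U r) :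
    dT'V p q V W U' a u e' r (rowSwapEquiv p q V W c hc τ r x) =
      c • dTV p q V W U a u m r x := by
  subst he'
  by_cases h : r = -(p : ℤ) - 1
  · simp [dT'V, dTV, h, rowSwapEquiv, prV', prV, prZ2', prZ1, smul_smul]
  · simp [dT'V, dTV, h, rowSwapEquiv, prV', prV]

lemma dT'U_rowSwapEquiv (σ : U ≃ₗ[ℝ] U') {c' lam kap kap' : ℝ} (hτ : ∀ y, τ y = c' • σ y)
    (hs : -kap' * c = c' * lam) (ht : c = -(c' * kap)) (r : ℤ) (x : TTerm p q V W U r) :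
    (dT'U p q V W U U' s t σ kap' r (rowSwapEquiv p q V W c hc τ r x) : U') =
      τ (dTU p q V W U s t lam kap r x : U) := by
  by_cases h : r = 0
  · subst h
    simp only [dT'U, dTU, dif_pos, intoModAt, rowSwapEquiv, prV', prV, prW', prW, hτ,
      AddMonoidHom.comp_apply, AddMonoidHom.add_apply, AddMonoidHom.coe_mk, ZeroHom.coe_mk,
      AddEquiv.coe_mk, Equiv.coe_fn_mk, AddMonoidHom.mk'_apply, LinearMap.toAddMonoidHom_coe,
      LinearMap.smul_apply, LinearMap.comp_apply, LinearEquiv.coe_coe, famCast_smul, map_smul,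
      Submodule.coe_add, map_add]
    match_scalars
    · linear_combination ht
    · linear_combination hs
  · simp [dT'U, dTU, h]

end RowSwap

theorem abelian_duality_at_the_cochain_level
    (p q : ℕ) (V W : ℤ → Type v)
    [∀ i, AddCommGroup (V i)] [∀ i, Module ℝ (V i)]
    [∀ i, AddCommGroup (W i)] [∀ i, Module ℝ (W i)]
    (U U' : Type v) [AddCommGroup U] [Module ℝ U] [AddCommGroup U'] [Module ℝ U']
    (a : ∀ i : ℤ, V i →ₗ[ℝ] V (i + 1)) (b : ∀ i : ℤ, W i →ₗ[ℝ] W (i + 1))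
    (s : V (p : ℤ) →ₗ[ℝ] U) (t : W (q : ℤ) →ₗ[ℝ] U)
    (u : ℤ →+ V 0) (w : ℤ →+ W 0)
    -- the duality isomorphism σ on the degree-one terms
    (σ : U ≃ₗ[ℝ] U')
    (kap e : ℝ) (hkap : kap ≠ 0) (he : e ≠ 0) :
    ∃ φ : ∀ r : ℤ, TTerm p q V W U r ≃+ TTerm' p q V W U' r,
      -- φ is a chain map  T⟨1,e,1,κ⟩ → T'⟨1/κ,1/e⟩  …
      (∀ (r : ℤ) (x : TTerm p q V W U r),
        dT' p q V W U U' a b s t u w σ (1 / kap) (1 / e) r (φ r x) =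
          φ (r + 1) (dT p q V W U a b s t u w 1 e 1 kap r x)) ∧
      -- … given by the identity on the two copies of ℤ, multiplication by `1/e` on the
      -- `V`- and `W`-summands, and the map `−(1/(κe))·σ` on `U`.
      (∀ (r : ℤ) (x : TTerm p q V W U r),
        (φ r x).1 = x.2.1 ∧ (φ r x).2.1 = x.1 ∧
        (φ r x).2.2.1 = (1 / e) • x.2.2.2.1 ∧
        (φ r x).2.2.2.1 = (1 / e) • x.2.2.1 ∧
        ((φ r x).2.2.2.2 : U') = (-(1 / (kap * e))) • σ (x.2.2.2.2 : U)) := by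
  have hc : 1 / e ≠ 0 := one_div_ne_zero he
  have hc' : -(1 / (kap * e)) ≠ 0 := neg_ne_zero.2 (one_div_ne_zero (mul_ne_zero hkap he))
  let τ := σ.trans (LinearEquiv.smulOfNeZero ℝ U' _ hc')
  refine ⟨rowSwapEquiv p q V W (1 / e) hc τ, fun r x => ?_, fun r x => ⟨rfl, rfl, rfl, rfl, rfl⟩⟩
  refine Prod.ext rfl (Prod.ext rfl (Prod.ext ?_ (Prod.ext ?_ (Subtype.ext ?_))))
  · exact dT'W_rowSwapEquiv b w hc τ (one_div_mul_cancel he) r x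
  · exact dT'V_rowSwapEquiv a u hc τ (mul_one _).symm r x
  · refine dT'U_rowSwapEquiv s t hc τ σ (c' := -(1 / (kap * e))) (fun _ => rfl) ?_ ?_ r x
      <;> field_simp
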